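/- arXiv:1911.12884 — 2 statements merged into one kernel-verified Lean document; each statement's English description precedes it below -/
import Mathlib

section
/- Derivations in a rooted graph transformation system with relabelling are invertible: for every rule r = ⟨L ← K → R⟩ and all TLRGs G and H, G ⇒_r H (via some match) if and only if H ⇒_{r⁻¹} G (via some match), where r⁻¹ = ⟨R ← K → L⟩ is the inverse rule. -/
/-! # Rooted graph transformation with relabelling -/

/-- A graph over a label alphabet `(LV, LE)`: finite vertex and edge sets, total
source/target functions, a partial node-labelling function `l`, a total
edge-labelling function `m`, and a partial rootedness function `p`
(`some true` = root node, `some false` = non-root, `none` = undefined). -/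
structure RGraph (LV LE : Type) : Type 1 where
  V : Type
  E : Type
  finV : Finite V
  finE : Finite E
  s : E → V
  t : E → V
  l : V → Option LV
  m : E → LE
  p : V → Option Bool

namespace RGraph

variable {LV LE : Type}

def IsTotallyLabelled (G : RGraph LV LE) : Prop := ∀ v, (G.l v).isSome
def IsTotallyRooted (G : RGraph LV LE) : Prop := ∀ v, (G.p v).isSome
/-- totally labelled, totally rooted graph -/
def IsTLRG (G : RGraph LV LE) : Prop := G.IsTotallyLabelled ∧ G.IsTotallyRooted

/-- The number of root nodes `|p⁻¹({1})|`. -/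
noncomputable def rootCount (G : RGraph LV LE) : ℕ := Nat.card {v : G.V // G.p v = some true}

/-- The degree of a node. -/
noncomputable def degree (G : RGraph LV LE) (v : G.V) : ℕ :=
  Nat.card {e : G.E // G.s e = v} + Nat.card {e : G.E // G.t e = v}

end RGraph

/-- Graph morphisms preserve sources, targets, edge labels, and node labels and
rootedness wherever these are defined. -/
structure Morphism {LV LE : Type} (G H : RGraph LV LE) : Type where
  fV : G.V → H.V
  fE : G.E → H.E
  src : ∀ e, fV (G.s e) = H.s (fE e)
  tgt : ∀ e, fV (G.t e) = H.t (fE e)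
  edgeLabel : ∀ e, G.m e = H.m (fE e)
  nodeLabel : ∀ v x, G.l v = some x → H.l (fV v) = some x
  rootedness : ∀ v b, G.p v = some b → H.p (fV v) = some b

namespace Morphism

variable {LV LE : Type} {G H K : RGraph LV LE}

def Injective (g : Morphism G H) : Prop := Function.Injective g.fV ∧ Function.Injective g.fE

/-- identity morphism -/
def ident (G : RGraph LV LE) : Morphism G G where
  fV := id
  fE := id
  src := fun _ => rfl
  tgt := fun _ => rfl
  edgeLabel := fun _ => rfl
  nodeLabel := fun _ _ h => h
  rootedness := fun _ _ h => h

/-- composition of morphisms -/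
def comp (g : Morphism G H) (h : Morphism H K) : Morphism G K where
  fV := h.fV ∘ g.fV
  fE := h.fE ∘ g.fE
  src := fun e => by simp [Function.comp, g.src e, h.src (g.fE e)]
  tgt := fun e => by simp [Function.comp, g.tgt e, h.tgt (g.fE e)]
  edgeLabel := fun e => by simp [Function.comp, ← h.edgeLabel (g.fE e), g.edgeLabel e]
  nodeLabel := fun v x hx => h.nodeLabel _ _ (g.nodeLabel v x hx)
  rootedness := fun v b hb => h.rootedness _ _ (g.rootedness v b hb)

end Morphism

/-- An isomorphism of graphs: a morphism with a two-sided inverse morphism. -/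
structure Iso {LV LE : Type} (G H : RGraph LV LE) : Type where
  toMor : Morphism G H
  invMor : Morphism H G
  leftV : ∀ v, invMor.fV (toMor.fV v) = v
  leftE : ∀ e, invMor.fE (toMor.fE e) = e
  rightV : ∀ v, toMor.fV (invMor.fV v) = v
  rightE : ∀ e, toMor.fE (invMor.fE e) = e

/-- A rule `⟨L ← K → R⟩`: graphs `L`, `K`, `R` together with inclusion
(injective) morphisms `K ↪ L` and `K ↪ R`.  (In the rooted relabelling setting
`L` and `R` are additionally required to be TLRGs; this requirement is stated
as a hypothesis where needed.) -/
structure Rule (LV LE : Type) : Type 1 where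
  L : RGraph LV LE
  K : RGraph LV LE
  R : RGraph LV LE
  incL : Morphism K L
  incR : Morphism K R
  injL : incL.Injective
  injR : incR.Injective

namespace Rule

variable {LV LE : Type} (r : Rule LV LE) (G : RGraph LV LE)

/-- The inverse rule `r⁻¹ = ⟨R ← K → L⟩`. -/
def inv (r : Rule LV LE) : Rule LV LE where
  L := r.R
  K := r.K
  R := r.L
  incL := r.incR
  incR := r.incL
  injL := r.injR
  injR := r.injL

/-- The dangling condition: no edge of `G ∖ g(L)` is incident to a node of `g(L ∖ K)`. -/
def Dangling (g : Morphism r.L G) : Prop :=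
  ∀ e : G.E, (∀ e' : r.L.E, g.fE e' ≠ e) →
    ∀ v : r.L.V, (∀ k : r.K.V, r.incL.fV k ≠ v) →
      G.s e ≠ g.fV v ∧ G.t e ≠ g.fV v

/-- The match `g` is applicable: it is injective and satisfies the dangling condition. -/
def Applicable (g : Morphism r.L G) : Prop := g.Injective ∧ r.Dangling G g

/-- the nodes `g(L ∖ K)` deleted by applying `r` via `g` -/
def DelV (g : Morphism r.L G) : Set G.V :=
  {x | ∃ v : r.L.V, (∀ k : r.K.V, r.incL.fV k ≠ v) ∧ g.fV v = x}

/-- the edges `g(L ∖ K)` deleted by applying `r` via `g` -/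
def DelE (g : Morphism r.L G) : Set G.E :=
  {x | ∃ e : r.L.E, (∀ k : r.K.E, r.incL.fE k ≠ e) ∧ g.fE e = x}

theorem kept_incL {g : Morphism r.L G} (hinj : g.Injective) (k : r.K.V) :
    g.fV (r.incL.fV k) ∉ r.DelV G g := by
  rintro ⟨v, hv, heq⟩
  exact hv k (hinj.1 heq).symm

theorem kept_src {g : Morphism r.L G} (h : r.Applicable G g) {e : G.E}
    (he : e ∉ r.DelE G g) : G.s e ∉ r.DelV G g := by
  rintro ⟨v, hv, heq⟩
  by_cases hc : ∃ e', g.fE e' = e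
  · obtain ⟨e', rfl⟩ := hc
    by_cases hk : ∃ k, r.incL.fE k = e'
    · obtain ⟨k, rfl⟩ := hk
      have h1 : g.fV (r.L.s (r.incL.fE k)) = G.s (g.fE (r.incL.fE k)) := g.src _
      have h2 : r.incL.fV (r.K.s k) = r.L.s (r.incL.fE k) := r.incL.src k
      have h3 : g.fV v = g.fV (r.incL.fV (r.K.s k)) := by rw [heq, h2, h1]
      exact hv _ (h.1.1 h3).symm
    · exact he ⟨e', fun k hk' => hk ⟨k, hk'⟩, rfl⟩
  · exact (h.2 e (fun e' he' => hc ⟨e', he'⟩) v hv).1 heq.symm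

theorem kept_tgt {g : Morphism r.L G} (h : r.Applicable G g) {e : G.E}
    (he : e ∉ r.DelE G g) : G.t e ∉ r.DelV G g := by
  rintro ⟨v, hv, heq⟩
  by_cases hc : ∃ e', g.fE e' = e
  · obtain ⟨e', rfl⟩ := hc
    by_cases hk : ∃ k, r.incL.fE k = e'
    · obtain ⟨k, rfl⟩ := hk
      have h1 : g.fV (r.L.t (r.incL.fE k)) = G.t (g.fE (r.incL.fE k)) := g.tgt _
      have h2 : r.incL.fV (r.K.t k) = r.L.t (r.incL.fE k) := r.incL.tgt k
      have h3 : g.fV v = g.fV (r.incL.fV (r.K.t k)) := by rw [heq, h2, h1]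
      exact hv _ (h.1.1 h3).symm
    · exact he ⟨e', fun k hk' => hk ⟨k, hk'⟩, rfl⟩
  · exact (h.2 e (fun e' he' => hc ⟨e', he'⟩) v hv).2 heq.symm

attribute [local instance] Classical.propDecidable

/-- The result graph of applying `r` to `G` via an applicable match `g`:
delete `g(L ∖ K)` (undefining labels/rootedness of images of interface nodes
where they are undefined in `K`), then add `R ∖ K` disjointly, relabelling
(and re-rooting) the images of interface nodes according to `R`. -/
noncomputable def result (g : Morphism r.L G) (h : r.Applicable G g) : RGraph LV LE where
  V := {x : G.V // x ∉ r.DelV G g} ⊕ {v : r.R.V // ∀ k, r.incR.fV k ≠ v}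
  E := {x : G.E // x ∉ r.DelE G g} ⊕ {e : r.R.E // ∀ k, r.incR.fE k ≠ e}
  finV := by
    haveI := G.finV; haveI := r.R.finV
    infer_instance
  finE := by
    haveI := G.finE; haveI := r.R.finE
    infer_instance
  s := fun e =>
    match e with
    | Sum.inl x => Sum.inl ⟨G.s x.1, r.kept_src G h x.2⟩
    | Sum.inr x =>
        if hk : ∃ k, r.incR.fV k = r.R.s x.1 then
          Sum.inl ⟨g.fV (r.incL.fV hk.choose), r.kept_incL G h.1 _⟩
        else Sum.inr ⟨r.R.s x.1, fun k hk' => hk ⟨k, hk'⟩⟩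
  t := fun e =>
    match e with
    | Sum.inl x => Sum.inl ⟨G.t x.1, r.kept_tgt G h x.2⟩
    | Sum.inr x =>
        if hk : ∃ k, r.incR.fV k = r.R.t x.1 then
          Sum.inl ⟨g.fV (r.incL.fV hk.choose), r.kept_incL G h.1 _⟩
        else Sum.inr ⟨r.R.t x.1, fun k hk' => hk ⟨k, hk'⟩⟩
  l := fun v =>
    match v with
    | Sum.inl x =>
        if hk : ∃ k : r.K.V, r.K.l k = none ∧ g.fV (r.incL.fV k) = x.1 then
          r.R.l (r.incR.fV hk.choose)
        else G.l x.1
    | Sum.inr v => r.R.l v.1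
  m := fun e =>
    match e with
    | Sum.inl x => G.m x.1
    | Sum.inr x => r.R.m x.1
  p := fun v =>
    match v with
    | Sum.inl x =>
        if hk : ∃ k : r.K.V, r.K.p k = none ∧ g.fV (r.incL.fV k) = x.1 then
          r.R.p (r.incR.fV hk.choose)
        else G.p x.1
    | Sum.inr v => r.R.p v.1

/-- Direct derivation `G ⇒_r M`: there is an applicable match `g` such that `M`
is isomorphic to the result of applying `r` to `G` via `g`. -/
def Deriv (r : Rule LV LE) (G M : RGraph LV LE) : Prop :=
  ∃ (g : Morphism r.L G) (h : r.Applicable G g), Nonempty (Iso (r.result G g h) M)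

end Rule

/-- `G ⇒_𝓡 H` for a set of rules. -/
def GTStep {LV LE : Type} (Rs : Set (Rule LV LE)) (G H : RGraph LV LE) : Prop :=
  ∃ r ∈ Rs, r.Deriv G H

/-- `G ⇒*_𝓡 H`: the reflexive-transitive closure of `⇒_𝓡`, up to isomorphism. -/
def GTDerivStar {LV LE : Type} (Rs : Set (Rule LV LE)) (G H : RGraph LV LE) : Prop :=
  Relation.ReflTransGen (GTStep Rs) G H ∨ Nonempty (Iso G H)

/-!
Let `g : L → G` be an applicable match with result `H`. The comatch `R → H` (the identity on
the added copy of `R ∖ K`, and `g` on the interface) is injective, and it satisfies the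
dangling condition for `r⁻¹` because every edge of `H` outside its image is an edge of `G`,
whose endpoints are never added nodes. Applying `r⁻¹` via the comatch deletes exactly the added
copy of `R ∖ K` and glues `L ∖ K` back in along `g`. Interface nodes unlabelled (or of undefined
rootedness) in `K` receive their label in `L`, which is the label they had in `G` because `L` is
totally labelled and rooted and `g` preserves labels. So the result is isomorphic to `G`, and
since rule application is invariant under isomorphism of the host graph, `H ⇒_{r⁻¹} G`. The
converse is the same argument for `r⁻¹`, whose inverse is `r`.
-/

open Function
open scoped Classical

section Glue

variable {K R X : Type} {i : K → R} {j : K → X}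

variable (i j) in
noncomputable def glue (v : R) : X ⊕ {v // ∀ k, i k ≠ v} :=
  if hk : ∃ k, i k = v then .inl (j hk.choose) else .inr ⟨v, fun k hk' => hk ⟨k, hk'⟩⟩

theorem glue_apply (hi : Injective i) (k : K) : glue i j (i k) = .inl (j k) := by
  have hk : ∃ k', i k' = i k := ⟨k, rfl⟩
  rw [glue, dif_pos hk, hi hk.choose_spec]

theorem glue_of_forall_ne {v : R} (hv : ∀ k, i k ≠ v) : glue i j v = .inr ⟨v, hv⟩ :=
  dif_neg fun ⟨k, hk⟩ => hv k hk

theorem glue_injective (hi : Injective i) (hj : Injective j) : Injective (glue i j) := by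
  intro v w hvw
  rcases em (∃ k, i k = v) with ⟨k, rfl⟩ | hv <;>
    rcases em (∃ k, i k = w) with ⟨l, rfl⟩ | hw
  · rw [glue_apply hi, glue_apply hi] at hvw
    rw [hj (Sum.inl_injective hvw)]
  · rw [glue_apply hi, glue_of_forall_ne (not_exists.mp hw)] at hvw
    exact absurd hvw Sum.inl_ne_inr
  · rw [glue_apply hi, glue_of_forall_ne (not_exists.mp hv)] at hvw
    exact absurd hvw Sum.inr_ne_inl
  · rw [glue_of_forall_ne (not_exists.mp hv), glue_of_forall_ne (not_exists.mp hw)] at hvw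
    exact congrArg Subtype.val (Sum.inr_injective hvw)

theorem map_glue {Y : Type} (f : X → Y) (v : R) :
    Sum.map f id (glue i j v) = glue i (fun k => f (j k)) v := by
  unfold glue
  split_ifs <;> rfl

end Glue

section Relabel

variable {K R G α : Type} (i : K → R) (j : K → G) (fK : K → Option α) (fR : R → Option α)
  (fG : G → Option α)

/-- The label (or rootedness) of a kept node `x` after a rule application. -/
noncomputable def relabel (x : G) : Option α :=
  if hk : ∃ k, fK k = none ∧ j k = x then fR (i hk.choose) else fG x

variable {i j fK fR fG}

theorem relabel_eq {x : G} {c : Option α} (hK : ∀ k, fK k = none → j k = x → fR (i k) = c)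
    (hG : (¬∃ k, fK k = none ∧ j k = x) → fG x = c) : relabel i j fK fR fG x = c := by
  unfold relabel
  split_ifs with hk
  · exact hK _ hk.choose_spec.1 hk.choose_spec.2
  · exact hG hk

theorem relabel_apply (hj : Injective j) (k : K)
    (hk : ∀ a, fK k = some a → fG (j k) = fR (i k)) : relabel i j fK fR fG (j k) = fR (i k) :=
  relabel_eq (fun k' _ hk' => by rw [hj hk']) fun hne => by
    obtain ⟨a, ha⟩ := Option.ne_none_iff_exists'.mp fun hn => hne ⟨k, hn, rfl⟩
    exact hk a ha

theorem relabel_comp {G' : Type} {f : G → G'} (hf : Injective f) {fG' : G' → Option α} {x : G}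
    (hx : fG' (f x) = fG x) :
    relabel i (fun k => f (j k)) fK fR fG' (f x) = relabel i j fK fR fG x := by
  simp only [relabel, hf.eq_iff, hx]

theorem relabel_relabel {L Y : Type} {i' : K → L} {j' : K → Y} {fL : L → Option α}
    {fY : Y → Option α} {x : G} {y : Y} (hL : ∀ k, fL (i' k) = fG (j k))
    (hy : ∀ k, j' k = y ↔ j k = x) (hfY : fY y = relabel i j fK fR fG x) :
    relabel i' j' fK fL fY y = fG x := by
  refine relabel_eq (fun k _ hk => (hL k).trans (congrArg fG ((hy k).mp hk))) fun hne => ?_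
  exact hfY.trans (relabel_eq (fun k hk hjk => absurd ⟨k, hk, (hy k).mpr hjk⟩ hne) fun _ => rfl)

end Relabel

section Restore

variable {G L Y : Type} {S : Set G} {P : L → Prop} {D : Set ({x // x ∉ S} ⊕ Y)}

/-- Undoes a rule application: the kept part of `G`, together with a copy of `L ∖ K`,
mapped back into `G`. -/
def restore (g : L → G) (hD : D = Set.range .inr) : {w // w ∉ D} ⊕ {v // P v} → G
  | .inl ⟨.inl x, _⟩ => x.1
  | .inl ⟨.inr y, hw⟩ => (hw (hD ▸ Set.mem_range_self y)).elim
  | .inr v => g v.1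

variable {g : L → G} {hD : D = Set.range .inr}

theorem restore_inl_of_eq {w : {x // x ∉ S} ⊕ Y} (hw : w ∉ D) {x : {x // x ∉ S}}
    (hx : w = .inl x) : restore (P := P) g hD (.inl ⟨w, hw⟩) = x.1 := by
  subst hx
  rfl

theorem restore_bijective (hg : Injective g) (hS : S = g '' {v | P v}) :
    Bijective (restore (P := P) g hD) := by
  subst hD hS
  constructor
  · rintro (⟨x | y, hw⟩ | v) (⟨x' | y', hw'⟩ | v') h
    any_goals exact absurd (Set.mem_range_self _) hw
    any_goals exact absurd (Set.mem_range_self _) hw'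
    · exact congrArg Sum.inl (Subtype.ext (congrArg Sum.inl (Subtype.ext (h : x.1 = x'.1))))
    · exact absurd ⟨v'.1, v'.2, h.symm⟩ x.2
    · exact absurd ⟨v.1, v.2, h⟩ x'.2
    · exact congrArg _ (Subtype.ext (hg h))
  · intro x
    by_cases hx : x ∈ g '' {v | P v}
    · obtain ⟨v, hv, rfl⟩ := hx
      exact ⟨.inr ⟨v, hv⟩, rfl⟩
    · exact ⟨.inl ⟨.inl ⟨x, hx⟩, fun ⟨_, h⟩ => Sum.inr_ne_inl h⟩, rfl⟩

theorem restore_glue {K : Type} {i : K → L} (hi : Injective i) {j : K → {w // w ∉ D}}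
    (hj : ∀ k, restore (P := (∀ k, i k ≠ ·)) g hD (.inl (j k)) = g (i k)) (v : L) :
    restore g hD (glue i j v) = g v := by
  rcases em (∃ k, i k = v) with ⟨k, rfl⟩ | hv
  · rw [glue_apply hi, hj]
  · rw [glue_of_forall_ne (not_exists.mp hv)]
    rfl

end Restore

namespace Morphism

variable {LV LE : Type} {G H : RGraph LV LE}

theorem l_fV_of_isTotallyLabelled (g : Morphism G H) (hG : G.IsTotallyLabelled) (v : G.V) :
    H.l (g.fV v) = G.l v := by
  obtain ⟨a, ha⟩ := Option.isSome_iff_exists.mp (hG v)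
  rw [ha, g.nodeLabel v a ha]

theorem p_fV_of_isTotallyRooted (g : Morphism G H) (hG : G.IsTotallyRooted) (v : G.V) :
    H.p (g.fV v) = G.p v := by
  obtain ⟨b, hb⟩ := Option.isSome_iff_exists.mp (hG v)
  rw [hb, g.rootedness v b hb]

end Morphism

namespace Iso

variable {LV LE : Type} {A B C : RGraph LV LE}

def symm (φ : Iso A B) : Iso B A :=
  ⟨φ.invMor, φ.toMor, φ.rightV, φ.rightE, φ.leftV, φ.leftE⟩

def trans (φ : Iso A B) (ψ : Iso B C) : Iso A C where
  toMor := φ.toMor.comp ψ.toMor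
  invMor := ψ.invMor.comp φ.invMor
  leftV v := by simp [Morphism.comp, ψ.leftV, φ.leftV]
  leftE e := by simp [Morphism.comp, ψ.leftE, φ.leftE]
  rightV v := by simp [Morphism.comp, φ.rightV, ψ.rightV]
  rightE e := by simp [Morphism.comp, φ.rightE, ψ.rightE]

def equivV (φ : Iso A B) : A.V ≃ B.V := ⟨φ.toMor.fV, φ.invMor.fV, φ.leftV, φ.rightV⟩

def equivE (φ : Iso A B) : A.E ≃ B.E := ⟨φ.toMor.fE, φ.invMor.fE, φ.leftE, φ.rightE⟩

theorem injective_fV (φ : Iso A B) : Injective φ.toMor.fV := φ.equivV.injective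

theorem injective_fE (φ : Iso A B) : Injective φ.toMor.fE := φ.equivE.injective

theorem l_fV (φ : Iso A B) (v : A.V) : B.l (φ.toMor.fV v) = A.l v :=
  Option.ext fun a =>
    ⟨fun h => φ.leftV v ▸ φ.invMor.nodeLabel _ a h, φ.toMor.nodeLabel v a⟩

theorem p_fV (φ : Iso A B) (v : A.V) : B.p (φ.toMor.fV v) = A.p v :=
  Option.ext fun b =>
    ⟨fun h => φ.leftV v ▸ φ.invMor.rootedness _ b h, φ.toMor.rootedness v b⟩

def ofEquiv (eV : A.V ≃ B.V) (eE : A.E ≃ B.E)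
    (hs : ∀ e, eV (A.s e) = B.s (eE e)) (ht : ∀ e, eV (A.t e) = B.t (eE e))
    (hm : ∀ e, A.m e = B.m (eE e))
    (hl : ∀ v, A.l v = B.l (eV v)) (hp : ∀ v, A.p v = B.p (eV v)) : Iso A B where
  toMor := ⟨eV, eE, hs, ht, hm, fun v x hx => hl v ▸ hx, fun v b hb => hp v ▸ hb⟩
  invMor :=
    { fV := eV.symm
      fE := eE.symm
      src e := eV.symm_apply_eq.mpr (by rw [hs, eE.apply_symm_apply])
      tgt e := eV.symm_apply_eq.mpr (by rw [ht, eE.apply_symm_apply])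
      edgeLabel e := by rw [hm, eE.apply_symm_apply]
      nodeLabel v x hx := by rwa [hl, eV.apply_symm_apply]
      rootedness v b hb := by rwa [hp, eV.apply_symm_apply] }
  leftV := eV.symm_apply_apply
  leftE := eE.symm_apply_apply
  rightV := eV.apply_symm_apply
  rightE := eE.apply_symm_apply

end Iso

namespace Rule

variable {LV LE : Type} (r : Rule LV LE) {G : RGraph LV LE} {g : Morphism r.L G}

theorem kept_incL_fE (hinj : g.Injective) (k : r.K.E) : g.fE (r.incL.fE k) ∉ r.DelE G g :=
  fun ⟨_, he, heq⟩ => he k (hinj.2 heq).symm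

variable (h : r.Applicable G g)

noncomputable def comatchV : r.R.V → (r.result G g h).V :=
  glue r.incR.fV fun k => ⟨g.fV (r.incL.fV k), r.kept_incL G h.1 k⟩

noncomputable def comatchE : r.R.E → (r.result G g h).E :=
  glue r.incR.fE fun k => ⟨g.fE (r.incL.fE k), r.kept_incL_fE h.1 k⟩

theorem result_l_inl (x : {x : G.V // x ∉ r.DelV G g}) :
    (r.result G g h).l (.inl x) =
      relabel r.incR.fV (fun k => g.fV (r.incL.fV k)) r.K.l r.R.l G.l x.1 := rfl

theorem result_p_inl (x : {x : G.V // x ∉ r.DelV G g}) :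
    (r.result G g h).p (.inl x) =
      relabel r.incR.fV (fun k => g.fV (r.incL.fV k)) r.K.p r.R.p G.p x.1 := rfl

theorem comatchV_incR (k : r.K.V) :
    r.comatchV h (r.incR.fV k) = .inl ⟨g.fV (r.incL.fV k), r.kept_incL G h.1 k⟩ :=
  glue_apply r.injR.1 k

theorem comatchE_incR (k : r.K.E) :
    r.comatchE h (r.incR.fE k) = .inl ⟨g.fE (r.incL.fE k), r.kept_incL_fE h.1 k⟩ :=
  glue_apply r.injR.2 k

theorem comatchV_of_forall_ne {v : r.R.V} (hv : ∀ k, r.incR.fV k ≠ v) :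
    r.comatchV h v = .inr ⟨v, hv⟩ :=
  glue_of_forall_ne hv

theorem comatchE_of_forall_ne {e : r.R.E} (he : ∀ k, r.incR.fE k ≠ e) :
    r.comatchE h e = .inr ⟨e, he⟩ :=
  glue_of_forall_ne he

theorem comatchV_incR_eq_inl_iff (k : r.K.V) (x : {x : G.V // x ∉ r.DelV G g}) :
    r.comatchV h (r.incR.fV k) = .inl x ↔ g.fV (r.incL.fV k) = x.1 := by
  rw [comatchV_incR]
  exact ⟨fun hx => congrArg Subtype.val (Sum.inl_injective hx),
    fun hx => congrArg _ (Subtype.ext hx)⟩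

theorem comatch_src (e : r.R.E) :
    r.comatchV h (r.R.s e) = (r.result G g h).s (r.comatchE h e) := by
  rcases em (∃ k, r.incR.fE k = e) with ⟨k, rfl⟩ | he
  · rw [comatchE_incR, ← r.incR.src, comatchV_incR]
    exact congrArg Sum.inl (Subtype.ext ((congrArg g.fV (r.incL.src k)).trans (g.src _)))
  · rw [comatchE_of_forall_ne r h (not_exists.mp he)]
    rfl

theorem comatch_tgt (e : r.R.E) :
    r.comatchV h (r.R.t e) = (r.result G g h).t (r.comatchE h e) := by
  rcases em (∃ k, r.incR.fE k = e) with ⟨k, rfl⟩ | he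
  · rw [comatchE_incR, ← r.incR.tgt, comatchV_incR]
    exact congrArg Sum.inl (Subtype.ext ((congrArg g.fV (r.incL.tgt k)).trans (g.tgt _)))
  · rw [comatchE_of_forall_ne r h (not_exists.mp he)]
    rfl

theorem comatch_edgeLabel (e : r.R.E) : r.R.m e = (r.result G g h).m (r.comatchE h e) := by
  rcases em (∃ k, r.incR.fE k = e) with ⟨k, rfl⟩ | he
  · rw [comatchE_incR]
    exact (r.incR.edgeLabel k).symm.trans ((r.incL.edgeLabel k).trans (g.edgeLabel _))
  · rw [comatchE_of_forall_ne r h (not_exists.mp he)]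
    rfl

theorem injective_fV_incL (hg : g.Injective) : Injective fun k => g.fV (r.incL.fV k) :=
  hg.1.comp r.injL.1

theorem comatch_nodeLabel (v : r.R.V) (a : LV) (hv : r.R.l v = some a) :
    (r.result G g h).l (r.comatchV h v) = some a := by
  rcases em (∃ k, r.incR.fV k = v) with ⟨k, rfl⟩ | hv'
  · rw [comatchV_incR, result_l_inl]
    refine (relabel_apply (r.injective_fV_incL h.1) k fun b hb => ?_).trans hv
    rw [g.nodeLabel _ b (r.incL.nodeLabel k b hb), r.incR.nodeLabel k b hb]
  · rwa [comatchV_of_forall_ne r h (not_exists.mp hv')]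

theorem comatch_rootedness (v : r.R.V) (b : Bool) (hv : r.R.p v = some b) :
    (r.result G g h).p (r.comatchV h v) = some b := by
  rcases em (∃ k, r.incR.fV k = v) with ⟨k, rfl⟩ | hv'
  · rw [comatchV_incR, result_p_inl]
    refine (relabel_apply (r.injective_fV_incL h.1) k fun c hc => ?_).trans hv
    rw [g.rootedness _ c (r.incL.rootedness k c hc), r.incR.rootedness k c hc]
  · rwa [comatchV_of_forall_ne r h (not_exists.mp hv')]

noncomputable def comatch : Morphism r.R (r.result G g h) :=
  ⟨r.comatchV h, r.comatchE h, r.comatch_src h, r.comatch_tgt h, r.comatch_edgeLabel h,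
    r.comatch_nodeLabel h, r.comatch_rootedness h⟩

theorem comatchV_injective : Injective (r.comatchV h) :=
  glue_injective r.injR.1 fun _ _ hk => r.injL.1 (h.1.1 (congrArg Subtype.val hk))

theorem comatchE_injective : Injective (r.comatchE h) :=
  glue_injective r.injR.2 fun _ _ hk => r.injL.2 (h.1.2 (congrArg Subtype.val hk))

theorem comatch_dangling : r.inv.Dangling (r.result G g h) (r.comatch h) := by
  rintro (x | ⟨e, he⟩) hne v hv
  · change _ ≠ r.comatchV h v ∧ _ ≠ r.comatchV h v
    rw [r.comatchV_of_forall_ne h hv]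
    exact ⟨Sum.inl_ne_inr, Sum.inl_ne_inr⟩
  · exact absurd (r.comatchE_of_forall_ne h he) (hne e)

theorem applicable_comatch : r.inv.Applicable (r.result G g h) (r.comatch h) :=
  ⟨⟨r.comatchV_injective h, r.comatchE_injective h⟩, r.comatch_dangling h⟩

theorem inr_mem_inv_delV_comatch (v : {v : r.R.V // ∀ k, r.incR.fV k ≠ v}) :
    .inr v ∈ r.inv.DelV (r.result G g h) (r.comatch h) :=
  ⟨v.1, v.2, r.comatchV_of_forall_ne h v.2⟩

theorem inr_mem_inv_delE_comatch (e : {e : r.R.E // ∀ k, r.incR.fE k ≠ e}) :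
    .inr e ∈ r.inv.DelE (r.result G g h) (r.comatch h) :=
  ⟨e.1, e.2, r.comatchE_of_forall_ne h e.2⟩

theorem inv_delV_comatch : r.inv.DelV (r.result G g h) (r.comatch h) = Set.range .inr := by
  ext w
  constructor
  · rintro ⟨v, hv, rfl⟩
    exact ⟨⟨v, hv⟩, (r.comatchV_of_forall_ne h hv).symm⟩
  · rintro ⟨v, rfl⟩
    exact r.inr_mem_inv_delV_comatch h v

theorem inv_delE_comatch : r.inv.DelE (r.result G g h) (r.comatch h) = Set.range .inr := by
  ext w
  constructor
  · rintro ⟨e, he, rfl⟩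
    exact ⟨⟨e, he⟩, (r.comatchE_of_forall_ne h he).symm⟩
  · rintro ⟨e, rfl⟩
    exact r.inr_mem_inv_delE_comatch h e


theorem restore_inv_comatchV (v : r.L.V) :
    restore g.fV (r.inv_delV_comatch h) (r.inv.comatchV (r.applicable_comatch h) v) = g.fV v :=
  restore_glue r.injL.1 (fun k => restore_inl_of_eq _ (r.comatchV_incR h k)) v

noncomputable def inverseResultIso (hL : r.L.IsTLRG) :
    Iso (r.inv.result (r.result G g h) (r.comatch h) (r.applicable_comatch h)) G := by
  refine Iso.ofEquiv
    (.ofBijective (restore (S := r.DelV G g) g.fV (r.inv_delV_comatch h))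
      (restore_bijective h.1.1 rfl))
    (.ofBijective (restore (S := r.DelE G g) g.fE (r.inv_delE_comatch h))
      (restore_bijective h.1.2 rfl))
    ?_ ?_ ?_ ?_ ?_
  · rintro (⟨x | y, hw⟩ | e)
    · rfl
    · exact absurd (r.inr_mem_inv_delE_comatch h y) hw
    · exact (r.restore_inv_comatchV h _).trans (g.src e.1)
  · rintro (⟨x | y, hw⟩ | e)
    · rfl
    · exact absurd (r.inr_mem_inv_delE_comatch h y) hw
    · exact (r.restore_inv_comatchV h _).trans (g.tgt e.1)
  · rintro (⟨x | y, hw⟩ | e)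
    · rfl
    · exact absurd (r.inr_mem_inv_delE_comatch h y) hw
    · exact g.edgeLabel e.1
  · rintro (⟨x | y, hw⟩ | v)
    · exact relabel_relabel (fun k => (g.l_fV_of_isTotallyLabelled hL.1 _).symm)
        (r.comatchV_incR_eq_inl_iff h · x) (r.result_l_inl h x)
    · exact absurd (r.inr_mem_inv_delV_comatch h y) hw
    · exact (g.l_fV_of_isTotallyLabelled hL.1 v.1).symm
  · rintro (⟨x | y, hw⟩ | v)
    · exact relabel_relabel (fun k => (g.p_fV_of_isTotallyRooted hL.2 _).symm)
        (r.comatchV_incR_eq_inl_iff h · x) (r.result_p_inl h x)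
    · exact absurd (r.inr_mem_inv_delV_comatch h y) hw
    · exact (g.p_fV_of_isTotallyRooted hL.2 v.1).symm

end Rule

namespace Rule

variable {LV LE : Type} {s : Rule LV LE} {A B : RGraph LV LE} {m : Morphism s.L A}

theorem Applicable.comp (hm : s.Applicable A m) (φ : Iso A B) :
    s.Applicable B (m.comp φ.toMor) := by
  refine ⟨⟨φ.injective_fV.comp hm.1.1, φ.injective_fE.comp hm.1.2⟩, fun e he v hv => ?_⟩
  have he' : ∀ e', m.fE e' ≠ φ.invMor.fE e := fun e' h' =>
    he e' (by rw [← φ.rightE e, ← h']; rfl)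
  obtain ⟨hs, ht⟩ := hm.2 _ he' v hv
  rw [← φ.rightE e, ← φ.toMor.src, ← φ.toMor.tgt]
  exact ⟨φ.injective_fV.ne hs, φ.injective_fV.ne ht⟩

theorem mem_delV_comp_iff (φ : Iso A B) {x : A.V} :
    φ.toMor.fV x ∈ s.DelV B (m.comp φ.toMor) ↔ x ∈ s.DelV A m :=
  ⟨fun ⟨v, hv, hx⟩ => ⟨v, hv, φ.injective_fV hx⟩,
    fun ⟨v, hv, hx⟩ => ⟨v, hv, congrArg _ hx⟩⟩

theorem mem_delE_comp_iff (φ : Iso A B) {x : A.E} :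
    φ.toMor.fE x ∈ s.DelE B (m.comp φ.toMor) ↔ x ∈ s.DelE A m :=
  ⟨fun ⟨e, he, hx⟩ => ⟨e, he, φ.injective_fE hx⟩,
    fun ⟨e, he, hx⟩ => ⟨e, he, congrArg _ hx⟩⟩

variable (hm : s.Applicable A m) (φ : Iso A B)

theorem map_comatchV (v : s.R.V) :
    Sum.map (φ.equivV.subtypeEquiv fun _ => not_congr (mem_delV_comp_iff φ).symm) id
      (s.comatchV hm v) = s.comatchV (hm.comp φ) v :=
  map_glue _ v

noncomputable def resultCongr :
    Iso (s.result A m hm) (s.result B (m.comp φ.toMor) (hm.comp φ)) :=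
  Iso.ofEquiv
    (.sumCongr (φ.equivV.subtypeEquiv fun _ => not_congr (mem_delV_comp_iff φ).symm) (.refl _))
    (.sumCongr (φ.equivE.subtypeEquiv fun _ => not_congr (mem_delE_comp_iff φ).symm) (.refl _))
    (by
      rintro (x | e)
      exacts [congrArg Sum.inl (Subtype.ext (φ.toMor.src x.1)), s.map_comatchV hm φ _])
    (by
      rintro (x | e)
      exacts [congrArg Sum.inl (Subtype.ext (φ.toMor.tgt x.1)), s.map_comatchV hm φ _])
    (by rintro (x | e); exacts [φ.toMor.edgeLabel x.1, rfl])
    (by rintro (x | v); exacts [(relabel_comp φ.injective_fV (φ.l_fV x.1)).symm, rfl])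
    (by rintro (x | v); exacts [(relabel_comp φ.injective_fV (φ.p_fV x.1)).symm, rfl])

theorem Deriv.inv {r : Rule LV LE} (hL : r.L.IsTLRG) {G H : RGraph LV LE}
    (hGH : r.Deriv G H) : r.inv.Deriv H G := by
  obtain ⟨g, h, ⟨φ⟩⟩ := hGH
  exact ⟨(r.comatch h).comp φ.toMor, (r.applicable_comatch h).comp φ,
    ⟨(resultCongr _ φ).symm.trans (r.inverseResultIso h hL)⟩⟩

end Rule

theorem derivations_invertible_general {LV LE : Type} (r : Rule LV LE)
    (hL : r.L.IsTLRG) (hR : r.R.IsTLRG)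
    (G H : RGraph LV LE) :
    r.Deriv G H ↔ (Rule.inv r).Deriv H G :=
  ⟨Rule.Deriv.inv hL, Rule.Deriv.inv (r := r.inv) hR⟩

/-- **Invertibility of derivations** (Corollary: Derivations are invertible).
For every rule `r = ⟨L ← K → R⟩` (with `L`, `R` TLRGs) and all TLRGs `G`, `H`:
`G ⇒_r H` iff `H ⇒_{r⁻¹} G`, where `r⁻¹ = ⟨R ← K → L⟩`. -/
theorem derivations_invertible {LV LE : Type} (r : Rule LV LE)
    (hL : r.L.IsTLRG) (hR : r.R.IsTLRG)
    (G H : RGraph LV LE) (hG : G.IsTLRG) (hH : H.IsTLRG) :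
    r.Deriv G H ↔ (Rule.inv r).Deriv H G :=
  derivations_invertible_general r hL hR G H
end

section
/- The encoding e is a fully faithful functor from graphs over 𝓛 with their morphisms to standard totally labelled graphs over e(𝓛) with their morphisms: e preserves identities and composition, and for all graphs G, H over 𝓛 the map g ↦ e(g) is a bijection from the set of morphisms G → H to the set of morphisms e(G) → e(H). -/
namespace Rule

variable {LV LE : Type} (r : Rule LV LE) (G : RGraph LV LE)

attribute [local instance] Classical.propDecidable

end Rule

/-! ## Standard (totally labelled, unrooted) graphs and the encoding functor

A *standard* totally labelled graph is modelled as a graph whose node-labelling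
is total and whose rootedness function is everywhere undefined.  On such graphs
our morphisms are exactly the standard morphisms (total preservation of node
and edge labels; the rootedness clause is vacuous), and rule application
specialises to standard DPO rule application (the relabelling and re-rooting
clauses act trivially). -/

/-- a standard totally labelled graph: total labelling, no rootedness information -/
def RGraph.IsStandard {AV AE : Type} (G : RGraph AV AE) : Prop :=
  G.IsTotallyLabelled ∧ ∀ v, G.p v = none

/-- a standard rule: all three component graphs are standard (in particular the
interface is totally labelled, i.e. no relabelling) -/
def Rule.IsStandard {AV AE : Type} (r : Rule AV AE) : Prop :=
  r.L.IsStandard ∧ r.K.IsStandard ∧ r.R.IsStandard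

theorem Morphism.label_isSome {LV LE : Type} {G H : RGraph LV LE} (g : Morphism G H)
    {v : G.V} (h : (G.l v).isSome) : (H.l (g.fV v)).isSome := by
  obtain ⟨x, hx⟩ := Option.isSome_iff_exists.mp h
  rw [g.nodeLabel v x hx]
  rfl

theorem Morphism.root_isSome {LV LE : Type} {G H : RGraph LV LE} (g : Morphism G H)
    {v : G.V} (h : (G.p v).isSome) : (H.p (g.fV v)).isSome := by
  obtain ⟨b, hb⟩ := Option.isSome_iff_exists.mp h
  rw [g.rootedness v b hb]
  rfl

/-- The object encoding `e`: node labels and rootedness are encoded as labelled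
loops over the alphabet `e(𝓛) = ({□}, 𝓛_E ⊎ 𝓛_V ⊎ {0,1})`. -/
def enc {LV LE : Type} (G : RGraph LV LE) : RGraph Unit (LE ⊕ LV ⊕ Bool) where
  V := G.V
  E := G.E ⊕ {v : G.V // (G.l v).isSome} ⊕ {v : G.V // (G.p v).isSome}
  finV := G.finV
  finE := by haveI := G.finV; haveI := G.finE; infer_instance
  s := Sum.elim G.s (Sum.elim Subtype.val Subtype.val)
  t := Sum.elim G.t (Sum.elim Subtype.val Subtype.val)
  l := fun _ => some ()
  m := Sum.elim (fun e => Sum.inl (G.m e))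
        (Sum.elim (fun v => Sum.inr (Sum.inl ((G.l v.1).get v.2)))
                  (fun v => Sum.inr (Sum.inr ((G.p v.1).get v.2))))
  p := fun _ => none

theorem enc_isStandard {LV LE : Type} (G : RGraph LV LE) : (enc G).IsStandard :=
  ⟨fun _ => rfl, fun _ => rfl⟩

/-- The arrow encoding `e` on morphisms. -/
def encMor {LV LE : Type} {G H : RGraph LV LE} (g : Morphism G H) :
    Morphism (enc G) (enc H) where
  fV := g.fV
  fE := Sum.map g.fE (Sum.map (fun v => ⟨g.fV v.1, g.label_isSome v.2⟩)
                              (fun v => ⟨g.fV v.1, g.root_isSome v.2⟩))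
  src := by rintro (e | ⟨v, hv⟩ | ⟨v, hv⟩)
            · exact g.src e
            · rfl
            · rfl
  tgt := by rintro (e | ⟨v, hv⟩ | ⟨v, hv⟩)
            · exact g.tgt e
            · rfl
            · rfl
  edgeLabel := by
    rintro (e | ⟨v, hv⟩ | ⟨v, hv⟩)
    · exact congrArg Sum.inl (g.edgeLabel e)
    · obtain ⟨x, hx⟩ := Option.isSome_iff_exists.mp hv
      simp [enc, Sum.map, hx, g.nodeLabel v x hx]
    · obtain ⟨b, hb⟩ := Option.isSome_iff_exists.mp hv
      simp [enc, Sum.map, hb, g.rootedness v b hb]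
  nodeLabel := by
    rintro v x hx
    cases x
    rfl
  rootedness := by
    rintro v b hb
    exact nomatch hb


theorem encMor_injective {LV LE : Type} {G H : RGraph LV LE} {g : Morphism G H}
    (hg : g.Injective) : (encMor g).Injective := by
  refine ⟨hg.1, ?_⟩
  apply Function.Injective.sumMap hg.2
  apply Function.Injective.sumMap
  · intro a b h
    exact Subtype.ext (hg.1 (congrArg Subtype.val h))
  · intro a b h
    exact Subtype.ext (hg.1 (congrArg Subtype.val h))

/-- The encoding of a rule, `e(r) = ⟨e(L) ← e(K) → e(R)⟩`. -/
def encRule {LV LE : Type} (r : Rule LV LE) : Rule Unit (LE ⊕ LV ⊕ Bool) where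
  L := enc r.L
  K := enc r.K
  R := enc r.R
  incL := encMor r.incL
  incR := encMor r.incR
  injL := encMor_injective r.injL
  injR := encMor_injective r.injR

/-! The encoding is the identity on nodes and on the edges of `G`, and a morphism of encodings
cannot mix the three kinds of edges because their labels lie in different summands of
`LE ⊕ LV ⊕ Bool`. Moreover the label loop at `v` must go to a loop at the image of `v` carrying
the same label, which is exactly the preservation of node labels (and likewise for rootedness); so
every morphism `e(G) → e(H)` comes from a unique morphism `G → H`. -/

@[ext]
theorem Morphism.ext {LV LE : Type} {G H : RGraph LV LE} {g h : Morphism G H}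
    (hV : g.fV = h.fV) (hE : g.fE = h.fE) : g = h := by
  cases g; cases h; cases hV; cases hE; rfl

section Encoding

variable {LV LE : Type} {G H K : RGraph LV LE}

theorem encMor_ident (G : RGraph LV LE) : encMor (Morphism.ident G) = Morphism.ident (enc G) := by
  ext x
  · rfl
  · rcases x with e | ⟨v, hv⟩ | ⟨v, hv⟩ <;> rfl

theorem encMor_comp (g : Morphism G H) (h : Morphism H K) :
    encMor (g.comp h) = (encMor g).comp (encMor h) := by
  ext x
  · rfl
  · rcases x with e | ⟨v, hv⟩ | ⟨v, hv⟩ <;> rfl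

theorem injective_encMor : Function.Injective (encMor : Morphism G H → _) := by
  intro g g' h
  ext e
  · exact congrFun (congrArg Morphism.fV h) e
  · exact Sum.inl.inj (congrFun (congrArg Morphism.fE h) (Sum.inl e))

theorem enc_m_eq_inl_iff {x : (enc G).E} {a : LE} :
    (enc G).m x = Sum.inl a ↔ ∃ e, x = Sum.inl e ∧ G.m e = a := by
  rcases x with e | ⟨v, hv⟩ | ⟨v, hv⟩ <;> simp [enc]

theorem enc_m_eq_labelLoop_iff {x : (enc G).E} {a : LV} :
    (enc G).m x = Sum.inr (Sum.inl a) ↔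
      ∃ v hv, x = Sum.inr (Sum.inl ⟨v, hv⟩) ∧ G.l v = some a := by
  rcases x with e | ⟨v, hv⟩ | ⟨v, hv⟩
  · simp [enc]
  · simp [enc, Option.eq_some_iff_get_eq, hv]
  · simp [enc]

theorem enc_m_eq_rootLoop_iff {x : (enc G).E} {b : Bool} :
    (enc G).m x = Sum.inr (Sum.inr b) ↔
      ∃ v hv, x = Sum.inr (Sum.inr ⟨v, hv⟩) ∧ G.p v = some b := by
  rcases x with e | ⟨v, hv⟩ | ⟨v, hv⟩
  · simp [enc]
  · simp [enc]
  · simp [enc, Option.eq_some_iff_get_eq, hv]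

namespace Morphism

variable (φ : Morphism (enc G) (enc H))

theorem exists_fE_inl_eq (e : G.E) : ∃ e', φ.fE (Sum.inl e) = Sum.inl e' ∧ H.m e' = G.m e :=
  enc_m_eq_inl_iff.mp (φ.edgeLabel (Sum.inl e)).symm

theorem fE_labelLoop {v : G.V} (hv : (G.l v).isSome) :
    ∃ hw : (H.l (φ.fV v)).isSome,
      φ.fE (Sum.inr (Sum.inl ⟨v, hv⟩)) = Sum.inr (Sum.inl ⟨φ.fV v, hw⟩) ∧
        H.l (φ.fV v) = G.l v := by
  obtain ⟨w, hw, hx, hl⟩ :=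
    enc_m_eq_labelLoop_iff.mp (φ.edgeLabel (Sum.inr (Sum.inl ⟨v, hv⟩))).symm
  have hvw : φ.fV v = w := by simpa [hx, enc] using φ.src (Sum.inr (Sum.inl ⟨v, hv⟩))
  subst hvw
  exact ⟨hw, hx, by rw [hl, Option.some_get]⟩

theorem fE_rootLoop {v : G.V} (hv : (G.p v).isSome) :
    ∃ hw : (H.p (φ.fV v)).isSome,
      φ.fE (Sum.inr (Sum.inr ⟨v, hv⟩)) = Sum.inr (Sum.inr ⟨φ.fV v, hw⟩) ∧
        H.p (φ.fV v) = G.p v := by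
  obtain ⟨w, hw, hx, hp⟩ :=
    enc_m_eq_rootLoop_iff.mp (φ.edgeLabel (Sum.inr (Sum.inr ⟨v, hv⟩))).symm
  have hvw : φ.fV v = w := by simpa [hx, enc] using φ.src (Sum.inr (Sum.inr ⟨v, hv⟩))
  subst hvw
  exact ⟨hw, hx, by rw [hp, Option.some_get]⟩

noncomputable def ofEnc : Morphism G H where
  fV := φ.fV
  fE e := (φ.exists_fE_inl_eq e).choose
  src e := by
    have h := φ.src (Sum.inl e)
    rw [(φ.exists_fE_inl_eq e).choose_spec.1] at h
    exact h
  tgt e := by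
    have h := φ.tgt (Sum.inl e)
    rw [(φ.exists_fE_inl_eq e).choose_spec.1] at h
    exact h
  edgeLabel e := (φ.exists_fE_inl_eq e).choose_spec.2.symm
  nodeLabel v x hx := by
    rw [(φ.fE_labelLoop (Option.isSome_iff_exists.mpr ⟨x, hx⟩)).2.2, hx]
  rootedness v b hb := by
    rw [(φ.fE_rootLoop (Option.isSome_iff_exists.mpr ⟨b, hb⟩)).2.2, hb]

theorem encMor_ofEnc : encMor φ.ofEnc = φ := by
  ext x
  · rfl
  · rcases x with e | ⟨v, hv⟩ | ⟨v, hv⟩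
    · exact (φ.exists_fE_inl_eq e).choose_spec.1.symm
    · exact (φ.fE_labelLoop hv).2.1.symm
    · exact (φ.fE_rootLoop hv).2.1.symm

end Morphism

theorem surjective_encMor : Function.Surjective (encMor : Morphism G H → _) :=
  fun φ => ⟨φ.ofEnc, φ.encMor_ofEnc⟩

end Encoding

/-- **The encoding is a fully faithful functor**: `e` preserves identities and
composition, and for all graphs `G`, `H` over `𝓛` the map `g ↦ e(g)` is a
bijection from the morphisms `G → H` to the morphisms `e(G) → e(H)`. -/
theorem encoding_fully_faithful_functor {LV LE : Type} :
    (∀ G : RGraph LV LE, encMor (Morphism.ident G) = Morphism.ident (enc G)) ∧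
    (∀ (G H K : RGraph LV LE) (g : Morphism G H) (h : Morphism H K),
        encMor (g.comp h) = (encMor g).comp (encMor h)) ∧
    (∀ G H : RGraph LV LE,
        Function.Bijective (fun g : Morphism G H => encMor g)) :=
  ⟨encMor_ident, fun _ _ _ => encMor_comp, fun _ _ => ⟨injective_encMor, surjective_encMor⟩⟩
end
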